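/- arXiv:2409.19446 — 2 statements merged into one kernel-verified Lean document; each statement's English description precedes it below -/
import Mathlib

section
/- If M is a nonnegative integral primitive n×n matrix whose largest eigenvalue λ satisfies λ > 1, then λ^n ≥ |M| − n + 1, where |M| denotes the sum of all entries of M. -/
/-!
Fix a vertex `i` of the digraph of positive entries of `M` and sort the vertices into layers by
their distance from `i`. Primitivity makes every vertex reachable, so there are at most `n` layers,
and it makes every row sum `r u` positive. When the walk counts from `i` advance one step, a vertex
`u` of the current layer contributes `v u * r u ≥ v u + r u - 1` instead of `v u`; summing over the
layers, every row of `M ^ n` sums to at least `c = |M| - n + 1`. Hence the row sums of `M ^ (n t)`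
are at least `c ^ t`, and so is the trace of `M ^ (n t + k)` once `M ^ k > 0`. As the trace is the
sum of the eigenvalues, it is at most `n * λ ^ (n t + k)`, and letting `t → ∞` gives `c ≤ λ ^ n`.
-/

open Finset

theorem Finset.sum_add_sum_le_sum_mul_add_card {ι : Type*} [Fintype ι] [DecidableEq ι]
    {v r : ι → ℕ} (s : Finset ι) (hv : ∀ u ∈ s, 0 < v u) (hr : ∀ u, 0 < r u) :
    ∑ u, v u + ∑ u ∈ s, r u ≤ ∑ u, v u * r u + #s := by
  have hin : ∑ u ∈ s, (v u + r u) ≤ ∑ u ∈ s, (v u * r u + 1) :=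
    sum_le_sum fun u hu => by nlinarith [hv u hu, hr u]
  have hout : ∑ u ∈ sᶜ, v u ≤ ∑ u ∈ sᶜ, v u * r u :=
    sum_le_sum fun u _ => Nat.le_mul_of_pos_right _ (hr u)
  rw [sum_add_distrib, sum_add_distrib, ← card_eq_sum_ones] at hin
  rw [← sum_add_sum_compl s v, ← sum_add_sum_compl s fun u => v u * r u]
  omega

theorem le_of_forall_pow_le_mul_pow {K : Type*} [Field K] [LinearOrder K] [IsStrictOrderedRing K]
    [Archimedean K] {c R : K} (C : K) (hR : 0 < R) (h : ∀ t : ℕ, c ^ t ≤ C * R ^ t) : c ≤ R := by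
  by_contra! hlt
  obtain ⟨t, ht⟩ := pow_unbounded_of_one_lt C ((one_lt_div hR).2 hlt)
  rw [div_pow, lt_div_iff₀ (pow_pos hR t)] at ht
  linarith [h t]

namespace Matrix

variable {ι : Type*} [Fintype ι]

theorem sum_mul_apply {l m n α : Type*} [Fintype m] [Fintype n] [NonUnitalNonAssocSemiring α]
    (A : Matrix l m α) (B : Matrix m n α) (i : l) :
    ∑ j, (A * B) i j = ∑ u, A i u * ∑ j, B u j := by
  simp only [mul_apply, mul_sum]
  exact sum_comm

theorem mul_apply_pos_iff (A B : Matrix ι ι ℕ) (i j : ι) :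
    0 < (A * B) i j ↔ ∃ u, 0 < A i u ∧ 0 < B u j := by
  simp [mul_apply, sum_pos_iff]

theorem sum_apply_le_trace_mul (A : Matrix ι ι ℕ) {B : Matrix ι ι ℕ} (i : ι)
    (hB : ∀ u, 0 < B u i) : ∑ u, A i u ≤ (A * B).trace :=
  calc ∑ u, A i u ≤ ∑ u, A i u * B u i := by
        gcongr with u; exact Nat.le_mul_of_pos_right _ (hB u)
    _ = (A * B) i i := mul_apply.symm
    _ ≤ (A * B).trace := single_le_sum (f := fun j => (A * B) j j) (fun _ _ => Nat.zero_le _)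
        (mem_univ i)

variable [DecidableEq ι]

section Spectrum

variable {𝕜 : Type*} [NormedField 𝕜] [IsAlgClosed 𝕜]

theorem norm_trace_le_card_mul {B : Matrix ι ι 𝕜} {r : ℝ} (hr : 0 ≤ r)
    (h : ∀ μ ∈ spectrum 𝕜 B, ‖μ‖ ≤ r) : ‖B.trace‖ ≤ Fintype.card ι * r := by
  rw [trace_eq_sum_roots_charpoly]
  calc ‖B.charpoly.roots.sum‖ ≤ (B.charpoly.roots.map (‖·‖)).sum := norm_multiset_sum_le _
    _ ≤ (B.charpoly.roots.map (‖·‖)).card • r := by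
        refine Multiset.sum_le_card_nsmul _ _ ?_
        simp only [Multiset.mem_map]
        rintro _ ⟨μ, hμ, rfl⟩
        exact h μ (mem_spectrum_of_isRoot_charpoly (Polynomial.isRoot_of_mem_roots hμ))
    _ ≤ Fintype.card ι * r := by
        rw [Multiset.card_map, nsmul_eq_mul, ← B.charpoly_natDegree_eq_dim]
        gcongr
        exact_mod_cast Polynomial.card_roots' _

theorem norm_trace_pow_le {B : Matrix ι ι 𝕜} {r : ℝ} (hr : 0 ≤ r)
    (h : ∀ μ ∈ spectrum 𝕜 B, ‖μ‖ ≤ r) {m : ℕ} (hm : 0 < m) :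
    ‖(B ^ m).trace‖ ≤ Fintype.card ι * r ^ m := by
  refine norm_trace_le_card_mul (pow_nonneg hr m) ?_
  rw [spectrum.map_pow_of_pos B hm]
  rintro _ ⟨μ, hμ, rfl⟩
  rw [norm_pow]
  exact pow_le_pow_left₀ (norm_nonneg μ) (h μ hμ) m

theorem natCast_trace_pow_le (M : Matrix ι ι ℕ) {r : ℝ} (hr : 0 ≤ r)
    (h : ∀ μ ∈ spectrum ℂ (M.map (Nat.cast : ℕ → ℂ)), ‖μ‖ ≤ r) {m : ℕ} (hm : 0 < m) :
    ((M ^ m).trace : ℝ) ≤ Fintype.card ι * r ^ m := by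
  have hcast : (((M ^ m).trace : ℕ) : ℂ) = (M.map (Nat.cast : ℕ → ℂ) ^ m).trace :=
    calc (((M ^ m).trace : ℕ) : ℂ) = ((M ^ m).map (Nat.castRingHom ℂ)).trace :=
          AddMonoidHom.map_trace (Nat.castRingHom ℂ).toAddMonoidHom _
      _ = (M.map (Nat.cast : ℕ → ℂ) ^ m).trace := by rw [M.map_pow]; rfl
  rw [← Complex.norm_natCast, hcast]
  exact norm_trace_pow_le hr h hm

end Spectrum

variable {M : Matrix ι ι ℕ}

theorem sum_apply_pos_of_pow_apply_pos {k : ℕ} (hk : 0 < k) {u j : ι} (h : 0 < (M ^ k) u j) :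
    0 < ∑ l, M u l := by
  obtain ⟨k, rfl⟩ := Nat.exists_eq_succ_of_ne_zero hk.ne'
  rw [pow_succ', mul_apply_pos_iff] at h
  obtain ⟨l, hl, -⟩ := h
  exact sum_pos_iff.2 ⟨l, mem_univ l, hl⟩

theorem pow_le_sum_pow_apply {c : ℕ} (h : ∀ u, c ≤ ∑ j, M u j) (t : ℕ) (i : ι) :
    c ^ t ≤ ∑ j, (M ^ t) i j := by
  induction t with
  | zero => simp [one_apply]
  | succ t ih =>
    calc c ^ (t + 1) ≤ (∑ u, (M ^ t) i u) * c := by rw [pow_succ]; gcongr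
      _ = ∑ u, (M ^ t) i u * c := sum_mul ..
      _ ≤ ∑ u, (M ^ t) i u * ∑ j, M u j := by gcongr with u; exact h u
      _ = ∑ j, (M ^ (t + 1)) i j := by rw [pow_succ, sum_mul_apply]

variable (M) in
/-- The distance from `i` to `j` in the digraph of positive entries of `M` (`0` if `j` is
unreachable). -/
noncomputable def reachTime (i j : ι) : ℕ := sInf {t | 0 < (M ^ t) i j}

variable {i j : ι}

theorem reachTime_le {t : ℕ} (h : 0 < (M ^ t) i j) : reachTime M i j ≤ t :=
  Nat.sInf_le h

theorem pow_reachTime_apply_pos (hj : ∃ t, 0 < (M ^ t) i j) :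
    0 < (M ^ reachTime M i j) i j :=
  Nat.sInf_mem hj

theorem exists_reachTime_eq_of_reachTime_eq_succ (hj : ∃ t, 0 < (M ^ t) i j) {t : ℕ}
    (h : reachTime M i j = t + 1) : ∃ u, reachTime M i u = t ∧ 0 < M u j := by
  have hpos := pow_reachTime_apply_pos hj
  rw [h, pow_succ, mul_apply_pos_iff] at hpos
  obtain ⟨u, hu, huj⟩ := hpos
  have hj_le : reachTime M i j ≤ reachTime M i u + 1 := by
    refine reachTime_le ?_
    rw [pow_succ, mul_apply_pos_iff]
    exact ⟨u, pow_reachTime_apply_pos ⟨t, hu⟩, huj⟩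
  exact ⟨u, le_antisymm (reachTime_le hu) (by omega), huj⟩

theorem reachTime_lt_card (hreach : ∀ j, ∃ t, 0 < (M ^ t) i j) (j : ι) :
    reachTime M i j < Fintype.card ι := by
  have hattained : ∀ d s j, reachTime M i j = s + d → ∃ u, reachTime M i u = s := by
    intro d
    induction d with
    | zero => exact fun s j h => ⟨j, h⟩
    | succ d ih =>
      intro s j h
      obtain ⟨u, hu, -⟩ := exists_reachTime_eq_of_reachTime_eq_succ (hreach j) h
      exact ih s u hu
  have hsub : range (reachTime M i j + 1) ⊆ univ.image (reachTime M i) := fun s hs => by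
    obtain ⟨u, hu⟩ := hattained _ s j (Nat.add_sub_cancel' (mem_range_succ_iff.1 hs)).symm
    exact mem_image.2 ⟨u, mem_univ u, hu⟩
  have := (card_le_card hsub).trans card_image_le
  rw [card_range, card_univ] at this
  omega

theorem sum_sum_add_one_le_sum_pow_card_apply_add_card (hreach : ∀ j, ∃ t, 0 < (M ^ t) i j)
    (hrow : ∀ u, 0 < ∑ j, M u j) :
    ∑ u, ∑ j, M u j + 1 ≤ ∑ j, (M ^ Fintype.card ι) i j + Fintype.card ι := by
  let layer (t : ℕ) : Finset ι := {u | reachTime M i u = t}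
  have hstep : ∀ t, ∑ j, (M ^ t) i j + ∑ u ∈ layer t, ∑ j, M u j ≤
      ∑ j, (M ^ (t + 1)) i j + #(layer t) := fun t => by
    rw [pow_succ, sum_mul_apply]
    refine sum_add_sum_le_sum_mul_add_card _ (fun u hu => ?_) hrow
    rw [← (mem_filter.1 hu).2]
    exact pow_reachTime_apply_pos (hreach u)
  have htelescope : ∀ N, 1 + ∑ t ∈ range N, ∑ u ∈ layer t, ∑ j, M u j ≤
      ∑ j, (M ^ N) i j + ∑ t ∈ range N, #(layer t) := fun N => by
    induction N with
    | zero => simp [one_apply]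
    | succ N ih => rw [sum_range_succ, sum_range_succ]; linarith [hstep N]
  have hmaps : ∀ u ∈ univ, reachTime M i u ∈ range (Fintype.card ι) :=
    fun u _ => mem_range.2 (reachTime_lt_card hreach u)
  have := htelescope (Fintype.card ι)
  rwa [sum_fiberwise_of_maps_to hmaps, ← card_eq_sum_card_fiberwise hmaps, card_univ,
    add_comm] at this

end Matrix

theorem hamSong_bound_general (n : ℕ) (M : Matrix (Fin n) (Fin n) ℕ)
    (hprim : ∃ k : ℕ, 0 < k ∧ ∀ i j, 0 < (M ^ k) i j)
    (lam : ℝ)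
    (hmax : ∀ μ ∈ spectrum ℂ (M.map (Nat.cast : ℕ → ℂ)), ‖μ‖ ≤ lam)
    (hgt : 1 < lam) :
    (∑ i, ∑ j, (M i j : ℝ)) - n + 1 ≤ lam ^ n := by
  obtain ⟨k, hk, hpos⟩ := hprim
  rcases n.eq_zero_or_pos with rfl | hn
  · simp
  let i₀ : Fin n := ⟨0, hn⟩
  set c := ∑ i, ∑ j, M i j + 1 - n
  have hrow : ∀ i, c ≤ ∑ j, (M ^ n) i j := fun i => by
    have := Matrix.sum_sum_add_one_le_sum_pow_card_apply_add_card (fun j => ⟨k, hpos i j⟩)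
      (fun u => Matrix.sum_apply_pos_of_pow_apply_pos hk (hpos u u))
    rw [Fintype.card_fin] at this
    omega
  have hgrowth : ∀ t, (c : ℝ) ^ t ≤ n * lam ^ k * (lam ^ n) ^ t := fun t =>
    calc (c : ℝ) ^ t ≤ ((M ^ (n * t + k)).trace : ℕ) := by
          rw [pow_add, pow_mul]
          exact_mod_cast (Matrix.pow_le_sum_pow_apply hrow t i₀).trans
            (Matrix.sum_apply_le_trace_mul _ i₀ fun u => hpos u i₀)
      _ ≤ n * lam ^ (n * t + k) := by
          simpa using Matrix.natCast_trace_pow_le M (by linarith) hmax (by omega : 0 < n * t + k)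
      _ = n * lam ^ k * (lam ^ n) ^ t := by ring
  have hc : (∑ i, ∑ j, (M i j : ℝ)) + 1 ≤ c + n :=
    mod_cast (by omega : ∑ i, ∑ j, M i j + 1 ≤ c + n)
  linarith [le_of_forall_pow_le_mul_pow _ (pow_pos (by linarith) n) hgrowth]

/-- **Lemma (Ham–Song).** If `M` is a nonnegative integral primitive `n × n` matrix whose
largest eigenvalue `lam` (its Perron–Frobenius eigenvalue, dominating all complex
eigenvalues in modulus) satisfies `lam > 1`, then `lam ^ n ≥ |M| − n + 1`, where `|M|`
is the sum of all entries of `M`. -/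
theorem hamSong_bound (n : ℕ) (M : Matrix (Fin n) (Fin n) ℕ)
    (hprim : ∃ k : ℕ, 0 < k ∧ ∀ i j, 0 < (M ^ k) i j)
    (lam : ℝ)
    (hmem : lam ∈ spectrum ℝ (M.map (Nat.cast : ℕ → ℝ)))
    (hmax : ∀ μ ∈ spectrum ℂ (M.map (Nat.cast : ℕ → ℂ)), ‖μ‖ ≤ lam)
    (hgt : 1 < lam) :
    (∑ i, ∑ j, (M i j : ℝ)) - n + 1 ≤ lam ^ n :=
  hamSong_bound_general n M hprim lam hmax hgt
end

section
/- Let M be a nonnegative integral irreducible n×n matrix with Perron–Frobenius eigenvalue λ > 1, and let S = (sum of all entries of M) − n. Then λ^n ≥ S + 1, provided M is primitive. -/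
/-!
Irreducibility makes every row sum `r_j` of `M` at least one, and, by Cayley–Hamilton, every entry
of `∑_{t<n} M^t` positive. The geometric-sum identity `M^n 𝟙 = 𝟙 + (∑_{t<n} M^t) (M - 1) 𝟙` then
bounds every row sum of `M^n` below by `1 + ∑_j (r_j - 1) = S + 1`. Hence `‖M^{nm}‖_∞ ≥ (S + 1)^m`
for all `m`, and Gelfand's formula with spectral mapping gives `S + 1 ≤ ρ(M^n) ≤ λ^n`.
-/

open Filter Finset Polynomial Matrix

attribute [local instance] Matrix.linftyOpSeminormedAddCommGroup Matrix.linftyOpNormedRing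
  Matrix.linftyOpNormedAlgebra

namespace spectrum

theorem ofReal_le_spectralRadius_of_pow_le_norm {A : Type*} [NormedRing A] [NormedAlgebra ℂ A]
    [CompleteSpace A] (a : A) {r : ℝ} (hr : 0 ≤ r) (h : ∀ m : ℕ, r ^ m ≤ ‖a ^ m‖) :
    ENNReal.ofReal r ≤ spectralRadius ℂ a := by
  refine le_trans ?_ (limsup_pow_nnnorm_pow_one_div_le_spectralRadius a)
  refine le_limsup_of_frequently_le (Eventually.frequently ?_)
  filter_upwards [eventually_ne_atTop 0] with m hm
  calc ENNReal.ofReal r = (ENNReal.ofReal r ^ m) ^ (1 / m : ℝ) := by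
        rw [one_div, ENNReal.pow_rpow_inv_natCast hm]
    _ ≤ (‖a ^ m‖₊ : ENNReal) ^ (1 / m : ℝ) := by
        gcongr
        rw [← ENNReal.ofReal_pow hr, ← ENNReal.ofReal_coe_nnreal, coe_nnnorm]
        exact ENNReal.ofReal_le_ofReal (h m)

theorem spectralRadius_pow_le_ofReal_pow {𝕜 A : Type*} [NormedField 𝕜] [IsAlgClosed 𝕜] [Ring A]
    [Algebra 𝕜 A] (a : A) {L : ℝ} (h : ∀ μ ∈ spectrum 𝕜 a, ‖μ‖ ≤ L) {k : ℕ} (hk : 0 < k) :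
    spectralRadius 𝕜 (a ^ k) ≤ ENNReal.ofReal (L ^ k) := by
  refine iSup₂_le fun μ hμ => ?_
  rw [map_pow_of_pos a hk] at hμ
  obtain ⟨ν, hν, rfl⟩ := hμ
  rw [← ENNReal.ofReal_coe_nnreal, coe_nnnorm, norm_pow]
  exact ENNReal.ofReal_le_ofReal (pow_le_pow_left₀ (norm_nonneg ν) (h ν hν) k)

end spectrum

namespace Matrix

variable {ι : Type*} [Fintype ι] [DecidableEq ι]

theorem map_natCast_pow {S : Type*} [Semiring S] (M : Matrix ι ι ℕ) (k : ℕ) :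
    (M.map (Nat.cast : ℕ → S)) ^ k = (M ^ k).map Nat.cast :=
  (map_pow (Nat.castRingHom S).mapMatrix M k).symm

theorem exists_coeff_pow_eq_sum_range_card {R : Type*} [CommRing R] [Nontrivial R] [Nonempty ι]
    (A : Matrix ι ι R) (k : ℕ) :
    ∃ c : ℕ → R, A ^ k = ∑ t ∈ range (Fintype.card ι), c t • A ^ t := by
  have hdeg : A.charpoly.natDegree ≠ 0 := by simp [Fintype.card_ne_zero]
  refine ⟨(X ^ k %ₘ A.charpoly).coeff, ?_⟩
  rw [pow_eq_aeval_mod_charpoly]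
  refine aeval_eq_sum_range' ?_ A
  rw [← charpoly_natDegree_eq_dim A]
  exact natDegree_modByMonic_lt _ (charpoly_monic A) fun h => hdeg (by simp [h])

theorem exists_lt_card_pow_apply_pos (M : Matrix ι ι ℕ) {i j : ι} {k : ℕ}
    (hk : 0 < (M ^ k) i j) : ∃ t < Fintype.card ι, 0 < (M ^ t) i j := by
  have : Nonempty ι := ⟨i⟩
  by_contra! h
  obtain ⟨c, hc⟩ := exists_coeff_pow_eq_sum_range_card (M.map (Nat.cast : ℕ → ℤ)) k
  have hkij := congr_fun₂ hc i j
  simp only [map_natCast_pow, map_apply, sum_apply, smul_apply] at hkij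
  rw [sum_eq_zero fun t ht => by simp [Nat.le_zero.mp (h t (mem_range.mp ht))]] at hkij
  omega

theorem one_le_mulVec_one_of_pow_apply_pos (M : Matrix ι ι ℕ) {i j : ι} {k : ℕ} (hk0 : 0 < k)
    (hk : 0 < (M ^ k) i j) : 1 ≤ (M.map (Nat.cast : ℕ → ℝ) *ᵥ 1) i := by
  obtain ⟨k, rfl⟩ := Nat.exists_eq_add_one_of_ne_zero hk0.ne'
  have hrow : 0 < ∑ l, M i l := by
    by_contra! h
    have hzero : ∀ l, M i l = 0 := fun l => sum_eq_zero_iff.mp (Nat.le_zero.mp h) l (mem_univ l)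
    simp [pow_succ', mul_apply, hzero] at hk
  simpa [mulVec, dotProduct] using (Nat.one_le_cast (α := ℝ)).mpr hrow

theorem pow_mulVec_one_eq {R : Type*} [Ring R] (A : Matrix ι ι R) (k : ℕ) :
    A ^ k *ᵥ 1 = 1 + (∑ t ∈ range k, A ^ t) *ᵥ (A *ᵥ 1 - 1) := by
  have h := congr_arg (· *ᵥ (1 : ι → R)) (geom_sum_mul A k)
  simp only [sub_mulVec, one_mulVec, ← mulVec_mulVec] at h
  rw [h, add_sub_cancel]

section OrderedRing

variable {R : Type*} [Ring R] [PartialOrder R] [IsOrderedRing R]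

theorem one_add_sum_le_pow_mulVec_one (A : Matrix ι ι R) (k : ℕ)
    (hrow : ∀ j, 1 ≤ (A *ᵥ 1) j) (hreach : ∀ i j, 1 ≤ (∑ t ∈ range k, A ^ t) i j) (i : ι) :
    1 + ∑ j, ((A *ᵥ 1) j - 1) ≤ (A ^ k *ᵥ 1) i := by
  rw [pow_mulVec_one_eq, Pi.add_apply, Pi.one_apply, add_le_add_iff_left, mulVec, dotProduct]
  exact sum_le_sum fun j _ => le_mul_of_one_le_left (sub_nonneg.mpr (hrow j)) (hreach i j)

end OrderedRing

theorem pow_le_pow_mulVec_one {R : Type*} [Semiring R] [PartialOrder R] [IsOrderedRing R]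
    {A : Matrix ι ι R} (hA : ∀ i j, 0 ≤ A i j) {r : R} (hr : 0 ≤ r)
    (hrow : ∀ i, r ≤ (A *ᵥ 1) i) (m : ℕ) (i : ι) : r ^ m ≤ (A ^ m *ᵥ 1) i := by
  induction m generalizing i with
  | zero => simp
  | succ m ih =>
    calc r ^ (m + 1) = r * r ^ m := pow_succ' r m
      _ ≤ (A *ᵥ 1) i * r ^ m := mul_le_mul_of_nonneg_right (hrow i) (pow_nonneg hr m)
      _ = ∑ j, A i j * r ^ m := by simp [mulVec, dotProduct, sum_mul]
      _ ≤ ∑ j, A i j * (A ^ m *ᵥ 1) j :=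
        sum_le_sum fun j _ => mul_le_mul_of_nonneg_left (ih j) (hA i j)
      _ = (A ^ (m + 1) *ᵥ 1) i := by rw [pow_succ', ← mulVec_mulVec]; rfl

theorem one_add_sum_le_pow_card_mulVec_one (M : Matrix ι ι ℕ)
    (hirr : ∀ i j, ∃ k, 0 < k ∧ 0 < (M ^ k) i j) (i : ι) :
    1 + ∑ j, ((M.map (Nat.cast : ℕ → ℝ) *ᵥ 1) j - 1) ≤
      ((M ^ Fintype.card ι).map (Nat.cast : ℕ → ℝ) *ᵥ 1) i := by
  rw [← map_natCast_pow]
  refine one_add_sum_le_pow_mulVec_one _ _ (fun j => ?_) (fun i j => ?_) i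
  · obtain ⟨k, hk0, hk⟩ := hirr j j
    exact M.one_le_mulVec_one_of_pow_apply_pos hk0 hk
  · obtain ⟨k, -, hk⟩ := hirr i j
    obtain ⟨t, ht, htpos⟩ := M.exists_lt_card_pow_apply_pos hk
    have hentry : ∀ s, ((M.map (Nat.cast : ℕ → ℝ)) ^ s) i j = ((M ^ s) i j : ℝ) := fun s => by
      rw [map_natCast_pow, map_apply]
    rw [sum_apply]
    calc (1 : ℝ) ≤ ((M.map (Nat.cast : ℕ → ℝ)) ^ t) i j := by
          rw [hentry]; exact_mod_cast htpos
      _ ≤ _ := single_le_sum (f := fun s => ((M.map (Nat.cast : ℕ → ℝ)) ^ s) i j)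
          (fun s _ => by rw [hentry]; positivity) (mem_range.mpr ht)

theorem sum_norm_apply_le_linfty_opNorm {m n α : Type*} [Fintype m] [Fintype n]
    [SeminormedAddCommGroup α] (A : Matrix m n α) (i : m) : ∑ j, ‖A i j‖ ≤ ‖A‖ := by
  rw [linfty_opNorm_def]
  simp_rw [← coe_nnnorm, ← NNReal.coe_sum]
  exact_mod_cast Finset.le_sup (f := fun i => ∑ j, ‖A i j‖₊) (Finset.mem_univ i)

theorem ofReal_le_spectralRadius_of_le_mulVec_one [Nonempty ι] (M : Matrix ι ι ℕ) {r : ℝ}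
    (hr : 0 ≤ r) (hrow : ∀ i, r ≤ (M.map (Nat.cast : ℕ → ℝ) *ᵥ 1) i) :
    ENNReal.ofReal r ≤ spectralRadius ℂ (M.map (Nat.cast : ℕ → ℂ)) := by
  let i : ι := Classical.arbitrary ι
  refine spectrum.ofReal_le_spectralRadius_of_pow_le_norm _ hr fun m => ?_
  calc r ^ m ≤ ((M.map (Nat.cast : ℕ → ℝ)) ^ m *ᵥ 1) i :=
        pow_le_pow_mulVec_one (fun _ _ => Nat.cast_nonneg _) hr hrow m i
    _ = ∑ j, ‖((M.map (Nat.cast : ℕ → ℂ)) ^ m) i j‖ := by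
        simp [map_natCast_pow, mulVec, dotProduct]
    _ ≤ _ := sum_norm_apply_le_linfty_opNorm _ i

end Matrix

theorem primitive_entry_sum_bound_general (n : ℕ) (M : Matrix (Fin n) (Fin n) ℕ)
    (hirr : ∀ i j : Fin n, ∃ k : ℕ, 0 < k ∧ 0 < (M ^ k) i j)
    (lam : ℝ)
    (hmax : ∀ μ ∈ spectrum ℂ (M.map (Nat.cast : ℕ → ℂ)), ‖μ‖ ≤ lam)
    (S : ℤ) (hS : S = (∑ i, ∑ j, (M i j : ℤ)) - n) :
    (S : ℝ) + 1 ≤ lam ^ n := by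
  rcases Nat.eq_zero_or_pos n with rfl | hn
  · simp [hS]
  have hS_eq : (S : ℝ) = ∑ j, ((M.map (Nat.cast : ℕ → ℝ) *ᵥ 1) j - 1) := by
    rw [hS]
    push_cast
    simp [mulVec, dotProduct, sum_sub_distrib]
  have hS_nonneg : 0 ≤ (S : ℝ) := hS_eq ▸ sum_nonneg fun j _ => by
    obtain ⟨k, hk0, hk⟩ := hirr j j
    exact sub_nonneg.mpr (M.one_le_mulVec_one_of_pow_apply_pos hk0 hk)
  have hrow : ∀ i, (S : ℝ) + 1 ≤ ((M ^ n).map (Nat.cast : ℕ → ℝ) *ᵥ 1) i := by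
    simpa [hS_eq, add_comm] using M.one_add_sum_le_pow_card_mulVec_one hirr
  have : Nonempty (Fin n) := ⟨⟨0, hn⟩⟩
  have hlow := (M ^ n).ofReal_le_spectralRadius_of_le_mulVec_one (by positivity) hrow
  rw [← map_natCast_pow] at hlow
  have hbound := hlow.trans (spectrum.spectralRadius_pow_le_ofReal_pow _ hmax hn)
  exact (ENNReal.ofReal_le_ofReal_iff'.mp hbound).resolve_right (by linarith)

/-- Let `M` be a nonnegative integral irreducible `n × n` matrix with Perron–Frobenius
eigenvalue `lam > 1`, and let `S = (sum of all entries of M) − n`. If `M` is primitive,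
then `lam ^ n ≥ S + 1`. -/
theorem primitive_entry_sum_bound (n : ℕ) (M : Matrix (Fin n) (Fin n) ℕ)
    (hirr : ∀ i j : Fin n, ∃ k : ℕ, 0 < k ∧ 0 < (M ^ k) i j)
    (hprim : ∃ k : ℕ, 0 < k ∧ ∀ i j, 0 < (M ^ k) i j)
    (lam : ℝ)
    (hmem : lam ∈ spectrum ℝ (M.map (Nat.cast : ℕ → ℝ)))
    (hmax : ∀ μ ∈ spectrum ℂ (M.map (Nat.cast : ℕ → ℂ)), ‖μ‖ ≤ lam)
    (hgt : 1 < lam)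
    (S : ℤ) (hS : S = (∑ i, ∑ j, (M i j : ℤ)) - n) :
    (S : ℝ) + 1 ≤ lam ^ n :=
  primitive_entry_sum_bound_general n M hirr lam hmax S hS
end
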